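/- For every n and d, the polynomial p(x) = (x₁² + ⋯ + x_n²)^d is sos-convex: the polynomial (x,y) ↦ yᵀ H_p(x) y is a sum of squares of polynomials in (x,y). -/

import Mathlib

/-!
Differentiating twice, `yᵀ ∇²(p ^ d) y = d (d - 1) p ^ (d - 2) (∇p · y) ^ 2 + d p ^ (d - 1) yᵀ ∇²p y`.
Sums of squares are closed under products, so `p ^ d` is sos-convex as soon as `p` is both a sum
of squares and sos-convex. Both hold for `p = ∑ xₖ²`, whose Hessian form is `∑ 2 yₖ²`.
-/

open MvPolynomial

theorem IsSumSq.map {R S F : Type*} [Semiring R] [Semiring S] [FunLike F R S]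
    [RingHomClass F R S] (f : F) {s : R} (hs : IsSumSq s) : IsSumSq (f s) := by
  induction hs with
  | zero => simp
  | sq_add a _ ih => simpa using ih.sq_add (f a)

theorem IsSumSq.pow {R : Type*} [CommSemiring R] {s : R} (hs : IsSumSq s) (n : ℕ) :
    IsSumSq (s ^ n) := by
  induction n with
  | zero => simp
  | succ n ih => simpa [pow_succ] using ih.mul hs

theorem IsSumSq.exists_fin_sum_sq {R : Type*} [CommSemiring R] {s : R} (hs : IsSumSq s) :
    ∃ (r : ℕ) (q : Fin r → R), s = ∑ k, q k ^ 2 := by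
  induction hs with
  | zero => exact ⟨0, ![], by simp⟩
  | sq_add a _ ih =>
    obtain ⟨r, q, rfl⟩ := ih
    exact ⟨r + 1, Fin.cons a q, by simp [Fin.sum_univ_succ, sq]⟩

noncomputable section

variable {σ R : Type*} [CommSemiring R]

theorem pderiv_pderiv_pow (p : MvPolynomial σ R) (d : ℕ) (i j : σ) :
    pderiv i (pderiv j (p ^ d)) =
      (d * (d - 1 : ℕ) : MvPolynomial σ R) * p ^ (d - 2) * pderiv i p * pderiv j p
        + (d : MvPolynomial σ R) * p ^ (d - 1) * pderiv i (pderiv j p) := by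
  rw [pderiv_pow, Derivation.leibniz, Derivation.leibniz, pderiv_pow,
    show d - 1 - 1 = d - 2 by omega]
  simp only [smul_eq_mul, Derivation.map_natCast, mul_zero, add_zero]
  ring

variable [Fintype σ]

/- In the polynomials on `σ ⊕ σ` below, `Sum.inl i` stands for the point coordinate `x i` and
`Sum.inr i` for the direction coordinate `y i`. -/

def directionalDeriv (p : MvPolynomial σ R) : MvPolynomial (σ ⊕ σ) R :=
  ∑ i, rename Sum.inl (pderiv i p) * X (Sum.inr i)

def hessianForm (p : MvPolynomial σ R) : MvPolynomial (σ ⊕ σ) R :=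
  ∑ i, ∑ j, X (Sum.inr i) * rename Sum.inl (pderiv i (pderiv j p)) * X (Sum.inr j)

def IsSosConvex (p : MvPolynomial σ R) : Prop := IsSumSq (hessianForm p)

theorem eval_hessianForm (p : MvPolynomial σ R) (x y : σ → R) :
    eval (Sum.elim x y) (hessianForm p) =
      ∑ i, ∑ j, y i * eval x (pderiv i (pderiv j p)) * y j := by
  simp [hessianForm, eval_rename, Function.comp_def]

theorem hessianForm_pow (p : MvPolynomial σ R) (d : ℕ) :
    hessianForm (p ^ d) =
      (d * (d - 1 : ℕ) : MvPolynomial (σ ⊕ σ) R) * rename Sum.inl p ^ (d - 2)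
          * directionalDeriv p ^ 2
        + (d : MvPolynomial (σ ⊕ σ) R) * rename Sum.inl p ^ (d - 1) * hessianForm p := by
  simp only [hessianForm, directionalDeriv]
  rw [sq, Finset.sum_mul_sum]
  simp only [Finset.mul_sum, ← Finset.sum_add_distrib, pderiv_pderiv_pow, map_add, map_mul,
    map_pow, map_natCast]
  exact Finset.sum_congr rfl fun i _ => Finset.sum_congr rfl fun j _ => by ring

theorem IsSosConvex.pow {p : MvPolynomial σ R} (hconv : IsSosConvex p) (hp : IsSumSq p)
    (d : ℕ) : IsSosConvex (p ^ d) := by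
  have hp' : IsSumSq (rename Sum.inl p : MvPolynomial (σ ⊕ σ) R) := hp.map _
  rw [IsSosConvex, hessianForm_pow]
  exact ((((IsSumSq.natCast _).mul (.natCast _)).mul (hp'.pow _)).mul (IsSquare.sq _).isSumSq).add
    (((IsSumSq.natCast _).mul (hp'.pow _)).mul hconv)

variable [DecidableEq σ]

theorem pderiv_sum_X_sq (j : σ) : pderiv j (∑ k, X k ^ 2 : MvPolynomial σ R) = 2 * X j := by
  simp [pderiv_X, Pi.single_apply]

theorem hessianForm_sum_X_sq :
    hessianForm (∑ k, X k ^ 2 : MvPolynomial σ R) = ∑ i, 2 * X (Sum.inr i) ^ 2 := by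
  have pderiv_two (i : σ) : pderiv i (2 : MvPolynomial σ R) = 0 := by
    exact_mod_cast (pderiv i).map_natCast 2
  simp only [hessianForm, pderiv_sum_X_sq]
  simp [pderiv_two, pderiv_X, Pi.single_apply, apply_ite (rename _), map_ofNat,
    sq, mul_comm, mul_assoc]

theorem isSosConvex_sum_X_sq : IsSosConvex (∑ k, X k ^ 2 : MvPolynomial σ R) := by
  rw [IsSosConvex, hessianForm_sum_X_sq]
  exact .sum fun i _ => by simpa using (IsSumSq.natCast 2).mul (IsSquare.sq _).isSumSq

end

open MvPolynomial in
theorem sum_sq_pow_is_sos_convex (n d : ℕ) :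
    ∃ (r : ℕ) (q : Fin r → MvPolynomial (Fin n ⊕ Fin n) ℝ),
      ∀ (x y : Fin n → ℝ),
        ∑ i : Fin n, ∑ j : Fin n,
            y i * (eval x (pderiv i (pderiv j ((∑ k : Fin n, X k ^ 2) ^ d)))) * y j
          = ∑ k : Fin r, (eval (Sum.elim x y) (q k)) ^ 2 := by
  have hconv : IsSosConvex ((∑ k : Fin n, X k ^ 2 : MvPolynomial (Fin n) ℝ) ^ d) :=
    isSosConvex_sum_X_sq.pow (IsSumSq.sum_sq _ _) d
  obtain ⟨r, q, hq⟩ := hconv.exists_fin_sum_sq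
  refine ⟨r, q, fun x y => ?_⟩
  rw [← eval_hessianForm, hq]
  simp
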